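/- Let $V:[0,\infty)\to[0,\infty)$ be the renewal function $V(t)=\sum_{n\ge 1}\mathbb{P}\{S_n\le t\}$ of a random walk $S_n=\xi_1+\cdots+\xi_n$ with i.i.d. a.s. positive increments, and let $V_k$ denote the $k$-fold Lebesgue–Stieltjes convolution of $V$ with itself (so $V_1=V$ and $V_k(t)=\int_{[0,t]}V_{k-1}(t-y)\,dV(y)$). Then for every $k\in\mathbb{N}$ and all $x,h\ge 0$, $V_k(x+h)-V_k(x)\le (V(h)+1)\,(V(x+h))^{k-1}$. -/

import Mathlib

open MeasureTheory ProbabilityTheory Filter Real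

private lemma my_identDistrib_add {α : Type*} [MeasurableSpace α]
    {μ : Measure α} [IsFiniteMeasure μ]
    {f g f' g' : α → ℝ}
    (hfg : IndepFun f g μ) (hfg' : IndepFun f' g' μ)
    (hf : IdentDistrib f f' μ μ) (hg : IdentDistrib g g' μ μ) :
    IdentDistrib (fun ω => f ω + g ω) (fun ω => f' ω + g' ω) μ μ := by
  have h1 : IdentDistrib (fun ω => (f ω, g ω)) (fun ω => (f' ω, g' ω)) μ μ := by
    refine ⟨hf.aemeasurable_fst.prodMk hg.aemeasurable_fst,
      hf.aemeasurable_snd.prodMk hg.aemeasurable_snd, ?_⟩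
    rw [(indepFun_iff_map_prod_eq_prod_map_map hf.aemeasurable_fst hg.aemeasurable_fst).1 hfg,
      (indepFun_iff_map_prod_eq_prod_map_map hf.aemeasurable_snd hg.aemeasurable_snd).1 hfg',
      hf.map_eq, hg.map_eq]
  exact h1.comp measurable_add

private lemma my_tsum_shift (m : ℕ) (f : ℕ → ENNReal) (hf : ∀ n < m, f n = 0) :
    ∑' n, f n = ∑' j, f (j + m) := by
  refine (Function.Injective.tsum_eq (g := fun j => j + m) (add_left_injective m) ?_).symm
  intro n hn
  simp only [Function.mem_support] at hn
  by_contra hc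
  simp only [Set.mem_range, not_exists] at hc
  have hnm : n < m := by
    by_contra hge
    exact hc (n - m) (by omega)
  exact hn (hf n hnm)

private lemma my_tsum_conv (a c : ℕ → ENNReal) :
    ∑' n, ∑ m ∈ Finset.range (n + 1), a m * c (n - m) = (∑' m, a m) * ∑' j, c j := by
  have h1 : ∀ n : ℕ, ∑ m ∈ Finset.range (n + 1), a m * c (n - m)
      = ∑' m : ℕ, (if m ≤ n then a m * c (n - m) else 0) := by
    intro n
    rw [tsum_eq_sum (s := Finset.range (n + 1)) (by
      intro m hm
      rw [if_neg]
      simpa [Nat.lt_succ_iff] using hm)]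
    refine Finset.sum_congr rfl fun m hm => ?_
    rw [if_pos (by simpa [Nat.lt_succ_iff] using hm)]
  calc ∑' n, ∑ m ∈ Finset.range (n + 1), a m * c (n - m)
      = ∑' (n) (m), (if m ≤ n then a m * c (n - m) else 0) := by
        exact tsum_congr h1
    _ = ∑' (m) (n), (if m ≤ n then a m * c (n - m) else 0) := ENNReal.tsum_comm
    _ = ∑' m, a m * ∑' j, c j := by
        refine tsum_congr fun m => ?_
        rw [my_tsum_shift m (fun n => if m ≤ n then a m * c (n - m) else 0)
          (fun n hn => by rw [if_neg (by omega)])]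
        simp only [if_pos (Nat.le_add_left m _), Nat.add_sub_cancel]
        exact ENNReal.tsum_mul_left
    _ = (∑' m, a m) * ∑' j, c j := ENNReal.tsum_mul_right

private lemma my_block_sum_identDistrib {Ω : Type*} [MeasureSpace Ω]
    [IsProbabilityMeasure (ℙ : Measure Ω)]
    (ξ : ℕ → Ω → ℝ) (hmeas : ∀ n, Measurable (ξ n))
    (hindep : iIndepFun ξ ℙ)
    (hident : ∀ n, IdentDistrib (ξ n) (ξ 0) ℙ ℙ)
    (m j : ℕ) :
    IdentDistrib (fun ω => ∑ i ∈ Finset.Ico m (m + j), ξ i ω)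
      (fun ω => ∑ i ∈ Finset.range j, ξ i ω) ℙ ℙ := by
  induction j with
  | zero =>
    simp only [Nat.add_zero, Finset.Ico_self, Finset.sum_empty, Finset.range_zero]
    exact IdentDistrib.refl aemeasurable_const
  | succ j ih =>
    have h1 : (fun ω => ∑ i ∈ Finset.Ico m (m + (j + 1)), ξ i ω)
        = fun ω => (∑ i ∈ Finset.Ico m (m + j), ξ i ω) + ξ (m + j) ω := by
      funext ω
      rw [show m + (j + 1) = (m + j) + 1 from rfl,
        Finset.sum_Ico_succ_top (Nat.le_add_right m j)]
    have h2 : (fun ω => ∑ i ∈ Finset.range (j + 1), ξ i ω)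
        = fun ω => (∑ i ∈ Finset.range j, ξ i ω) + ξ j ω := by
      funext ω; rw [Finset.sum_range_succ]
    have ind1 : IndepFun (fun ω => ∑ i ∈ Finset.Ico m (m + j), ξ i ω) (ξ (m + j)) ℙ := by
      have h := hindep.indepFun_finsetSum_of_notMem hmeas
        (s := Finset.Ico m (m + j)) (i := m + j) (by simp)
      have : (∑ i ∈ Finset.Ico m (m + j), ξ i) = fun ω => ∑ i ∈ Finset.Ico m (m + j), ξ i ω := by
        funext ω; simp [Finset.sum_apply]
      rwa [this] at h
    have ind2 : IndepFun (fun ω => ∑ i ∈ Finset.range j, ξ i ω) (ξ j) ℙ := by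
      have h := hindep.indepFun_finsetSum_of_notMem hmeas
        (s := Finset.range j) (i := j) (by simp)
      have : (∑ i ∈ Finset.range j, ξ i) = fun ω => ∑ i ∈ Finset.range j, ξ i ω := by
        funext ω; simp [Finset.sum_apply]
      rwa [this] at h
    rw [h1, h2]
    exact my_identDistrib_add ind1 ind2 ih ((hident (m + j)).trans (hident j).symm)

private lemma my_indep_AB {Ω : Type*} [MeasureSpace Ω]
    [IsProbabilityMeasure (ℙ : Measure Ω)]
    (ξ : ℕ → Ω → ℝ) (hmeas : ∀ n, Measurable (ξ n))
    (hindep : iIndepFun ξ ℙ)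
    (x h : ℝ) (m n : ℕ) :
    ℙ (((⋂ j ∈ Finset.range m, {ω | ∑ i ∈ Finset.range (j + 1), ξ i ω ≤ x})
        ∩ {ω | x < ∑ i ∈ Finset.range (m + 1), ξ i ω})
        ∩ {ω | ∑ i ∈ Finset.Ico (m + 1) (n + 1), ξ i ω ≤ h})
      = ℙ ((⋂ j ∈ Finset.range m, {ω | ∑ i ∈ Finset.range (j + 1), ξ i ω ≤ x})
        ∩ {ω | x < ∑ i ∈ Finset.range (m + 1), ξ i ω})
        * ℙ {ω | ∑ i ∈ Finset.Ico (m + 1) (n + 1), ξ i ω ≤ h} := by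
  classical
  set S : Finset ℕ := Finset.range (m + 1) with hSdef
  set T : Finset ℕ := Finset.Ico (m + 1) (n + 1) with hTdef
  have hST : Disjoint S T := by
    simp only [hSdef, hTdef, Finset.disjoint_left, Finset.mem_range, Finset.mem_Ico]
    omega
  have hXY := hindep.indepFun_finset S T hST hmeas
  set X : Ω → S → ℝ := fun ω (i : S) => ξ i ω with hXdef
  set Y : Ω → T → ℝ := fun ω (i : T) => ξ i ω with hYdef
  set f1 : (S → ℝ) → (ℕ → ℝ) :=
    fun v j => ∑ i ∈ Finset.univ.filter (fun i : S => (i : ℕ) < j + 1), v i with hf1def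
  have hf1meas : Measurable f1 :=
    measurable_pi_lambda _ fun j => Finset.measurable_sum _ fun i _ => measurable_pi_apply i
  set f2 : (T → ℝ) → ℝ := fun v => ∑ i, v i with hf2def
  have hf2meas : Measurable f2 := Finset.measurable_sum _ fun i _ => measurable_pi_apply i
  have hcomp1 : ∀ (ω : Ω) (j : ℕ), j ≤ m →
      f1 (X ω) j = ∑ i ∈ Finset.range (j + 1), ξ i ω := by
    intro ω j hj
    rw [hf1def]
    simp only []
    rw [Finset.sum_filter]
    rw [show (∑ i : S, if (i : ℕ) < j + 1 then X ω i else 0)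
        = ∑ i ∈ S, (if i < j + 1 then ξ i ω else 0) from
      Finset.sum_coe_sort S (fun i => if i < j + 1 then ξ i ω else 0)]
    rw [← Finset.sum_filter]
    congr 1
    ext i
    simp only [hSdef, Finset.mem_filter, Finset.mem_range]
    omega
  have hcomp2 : ∀ ω : Ω, f2 (Y ω) = ∑ i ∈ Finset.Ico (m + 1) (n + 1), ξ i ω := by
    intro ω
    rw [hf2def]
    exact Finset.sum_coe_sort T (fun i => ξ i ω)
  set SA : Set (ℕ → ℝ) :=
    (⋂ j ∈ Finset.range m, {u : ℕ → ℝ | u j ≤ x}) ∩ {u : ℕ → ℝ | x < u m} with hSAdef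
  have hSAmeas : MeasurableSet SA := by
    refine MeasurableSet.inter ?_ (measurableSet_lt measurable_const (measurable_pi_apply m))
    refine MeasurableSet.biInter (Set.to_countable _) fun j _ =>
      measurableSet_le (measurable_pi_apply j) measurable_const
  have hAeq : X ⁻¹' (f1 ⁻¹' SA)
      = (⋂ j ∈ Finset.range m, {ω | ∑ i ∈ Finset.range (j + 1), ξ i ω ≤ x})
        ∩ {ω | x < ∑ i ∈ Finset.range (m + 1), ξ i ω} := by
    ext ω
    simp only [Set.mem_preimage, hSAdef, Set.mem_inter_iff, Set.mem_iInter, Set.mem_setOf_eq]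
    constructor
    · rintro ⟨h1, h2⟩
      refine ⟨fun j hj => ?_, ?_⟩
      · have := h1 j hj
        rwa [hcomp1 ω j (by simpa using (Finset.mem_range.1 hj).le)] at this
      · rwa [hcomp1 ω m le_rfl] at h2
    · rintro ⟨h1, h2⟩
      refine ⟨fun j hj => ?_, ?_⟩
      · rw [hcomp1 ω j (by simpa using (Finset.mem_range.1 hj).le)]
        exact h1 j hj
      · rwa [hcomp1 ω m le_rfl]
  have hBeq : Y ⁻¹' (f2 ⁻¹' Set.Iic h) = {ω | ∑ i ∈ Finset.Ico (m + 1) (n + 1), ξ i ω ≤ h} := by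
    ext ω
    simp only [Set.mem_preimage, Set.mem_Iic, Set.mem_setOf_eq, hcomp2]
  rw [← hAeq, ← hBeq, ← Set.preimage_comp, ← Set.preimage_comp]
  exact (hXY.comp hf1meas hf2meas).measure_inter_preimage_eq_mul SA (Set.Iic h)
    hSAmeas measurableSet_Iic

private lemma my_W_subadd {Ω : Type*} [MeasureSpace Ω]
    [IsProbabilityMeasure (ℙ : Measure Ω)]
    (ξ : ℕ → Ω → ℝ) (hmeas : ∀ n, Measurable (ξ n))
    (hindep : iIndepFun ξ ℙ)
    (hident : ∀ n, IdentDistrib (ξ n) (ξ 0) ℙ ℙ)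
    (x h : ℝ) (hh : 0 ≤ h) :
    ∑' n : ℕ, ℙ {ω | ∑ i ∈ Finset.range (n + 1), ξ i ω ≤ x + h}
      ≤ (∑' n : ℕ, ℙ {ω | ∑ i ∈ Finset.range (n + 1), ξ i ω ≤ x})
        + ((∑' n : ℕ, ℙ {ω | ∑ i ∈ Finset.range (n + 1), ξ i ω ≤ h}) + 1) := by
  classical
  have hSmeas : ∀ n : ℕ, Measurable fun ω => ∑ i ∈ Finset.range (n + 1), ξ i ω :=
    fun n => Finset.measurable_sum _ fun i _ => hmeas i
  set A : ℕ → Set Ω := fun m =>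
    (⋂ j ∈ Finset.range m, {ω | ∑ i ∈ Finset.range (j + 1), ξ i ω ≤ x})
      ∩ {ω | x < ∑ i ∈ Finset.range (m + 1), ξ i ω} with hAdef
  have hAmeas : ∀ m, MeasurableSet (A m) := by
    intro m
    refine MeasurableSet.inter ?_ (measurableSet_lt measurable_const (hSmeas m))
    exact MeasurableSet.biInter (Set.to_countable _) fun j _ =>
      measurableSet_le (hSmeas j) measurable_const
  have hAdisj' : ∀ m m', m < m' → Disjoint (A m) (A m') := by
    intro m m' hmm'
    rw [Set.disjoint_left]
    intro ω hm hm'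
    have h1 : x < ∑ i ∈ Finset.range (m + 1), ξ i ω := hm.2
    have h2 : ∑ i ∈ Finset.range (m + 1), ξ i ω ≤ x := by
      have := hm'.1
      rw [Set.mem_iInter₂] at this
      exact this m (Finset.mem_range.2 hmm')
    exact absurd h1 (not_lt.2 h2)
  have hAdisj : Pairwise (Function.onFun Disjoint A) := by
    intro m m' hne
    rcases lt_or_gt_of_ne hne with hlt | hgt
    · exact hAdisj' m m' hlt
    · exact (hAdisj' m' m hgt).symm
  have hAsum : ∑' m, ℙ (A m) ≤ 1 := by
    rw [← measure_iUnion hAdisj hAmeas]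
    exact prob_le_one
  set c : ℕ → ENNReal := fun j =>
    if j = 0 then 1 else ℙ {ω | ∑ i ∈ Finset.range ((j - 1) + 1), ξ i ω ≤ h} with hcdef
  have hcsum : ∑' j, c j
      = 1 + ∑' n : ℕ, ℙ {ω | ∑ i ∈ Finset.range (n + 1), ξ i ω ≤ h} := by
    rw [tsum_eq_zero_add' ENNReal.summable, show c 0 = 1 by simp [hcdef]]
    have : ∀ j : ℕ, c (j + 1) = ℙ {ω | ∑ i ∈ Finset.range (j + 1), ξ i ω ≤ h} :=
      fun j => by simp [hcdef]
    rw [tsum_congr this]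
  have hPB : ∀ m n : ℕ, m ≤ n →
      ℙ {ω | ∑ i ∈ Finset.Ico (m + 1) (n + 1), ξ i ω ≤ h} = c (n - m) := by
    intro m n hmn
    rcases eq_or_lt_of_le hmn with rfl | hlt
    · simp only [Finset.Ico_self, Finset.sum_empty, Nat.sub_self]
      have huniv : {ω : Ω | (0 : ℝ) ≤ h} = Set.univ := by
        ext ω; simp [hh]
      have hc0 : c 0 = 1 := by simp [hcdef]
      rw [huniv, measure_univ, hc0]
    · have hblock := my_block_sum_identDistrib ξ hmeas hindep hident (m + 1) (n - m)
      have hIco : (m + 1) + (n - m) = n + 1 := by omega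
      rw [hIco] at hblock
      have h1 : ℙ {ω | ∑ i ∈ Finset.Ico (m + 1) (n + 1), ξ i ω ≤ h}
          = ℙ {ω | ∑ i ∈ Finset.range (n - m), ξ i ω ≤ h} := by
        have := hblock.measure_mem_eq (s := Set.Iic h) measurableSet_Iic
        simpa [Set.preimage, Set.mem_Iic] using this
      rw [h1, hcdef]
      simp only [if_neg (by omega : ¬ n - m = 0)]
      have : (n - m - 1) + 1 = n - m := by omega
      rw [this]
  have hstep : ∀ n : ℕ, ℙ {ω | ∑ i ∈ Finset.range (n + 1), ξ i ω ≤ x + h}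
      ≤ ℙ {ω | ∑ i ∈ Finset.range (n + 1), ξ i ω ≤ x}
        + ∑ m ∈ Finset.range (n + 1), ℙ (A m) * c (n - m) := by
    intro n
    have hsubset : {ω | ∑ i ∈ Finset.range (n + 1), ξ i ω ≤ x + h}
        ⊆ {ω | ∑ i ∈ Finset.range (n + 1), ξ i ω ≤ x}
          ∪ ⋃ m ∈ Finset.range (n + 1),
              (A m ∩ {ω | ∑ i ∈ Finset.Ico (m + 1) (n + 1), ξ i ω ≤ h}) := by
      intro ω hω
      simp only [Set.mem_setOf_eq] at hω
      by_cases hx' : ∑ i ∈ Finset.range (n + 1), ξ i ω ≤ x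
      · exact Or.inl hx'
      · push_neg at hx'
        right
        have hex : ∃ m, x < ∑ i ∈ Finset.range (m + 1), ξ i ω := ⟨n, hx'⟩
        set m₀ := Nat.find hex with hm₀def
        have hspec : x < ∑ i ∈ Finset.range (m₀ + 1), ξ i ω := Nat.find_spec hex
        have hmin : ∀ j < m₀, ¬ x < ∑ i ∈ Finset.range (j + 1), ξ i ω :=
          fun j hj => Nat.find_min hex hj
        have hm₀n : m₀ ≤ n := Nat.find_le hx'
        refine Set.mem_biUnion (Finset.mem_range.2 (Nat.lt_succ_of_le hm₀n)) ?_
        refine ⟨⟨?_, hspec⟩, ?_⟩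
        · rw [Set.mem_iInter₂]
          intro j hj
          exact le_of_not_gt (hmin j (Finset.mem_range.1 hj))
        · simp only [Set.mem_setOf_eq]
          rw [Finset.sum_Ico_eq_sub _ (by omega : m₀ + 1 ≤ n + 1)]
          linarith
    calc ℙ {ω | ∑ i ∈ Finset.range (n + 1), ξ i ω ≤ x + h}
        ≤ ℙ ({ω | ∑ i ∈ Finset.range (n + 1), ξ i ω ≤ x}
            ∪ ⋃ m ∈ Finset.range (n + 1),
                (A m ∩ {ω | ∑ i ∈ Finset.Ico (m + 1) (n + 1), ξ i ω ≤ h})) :=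
          measure_mono hsubset
      _ ≤ ℙ {ω | ∑ i ∈ Finset.range (n + 1), ξ i ω ≤ x}
            + ℙ (⋃ m ∈ Finset.range (n + 1),
                (A m ∩ {ω | ∑ i ∈ Finset.Ico (m + 1) (n + 1), ξ i ω ≤ h})) :=
          measure_union_le _ _
      _ ≤ ℙ {ω | ∑ i ∈ Finset.range (n + 1), ξ i ω ≤ x}
            + ∑ m ∈ Finset.range (n + 1),
                ℙ (A m ∩ {ω | ∑ i ∈ Finset.Ico (m + 1) (n + 1), ξ i ω ≤ h}) := by
          gcongr
          exact measure_biUnion_finset_le _ _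
      _ = ℙ {ω | ∑ i ∈ Finset.range (n + 1), ξ i ω ≤ x}
            + ∑ m ∈ Finset.range (n + 1), ℙ (A m) * c (n - m) := by
          congr 1
          refine Finset.sum_congr rfl fun m hm => ?_
          rw [hAdef]
          rw [my_indep_AB ξ hmeas hindep x h m n,
            hPB m n (by simpa [Nat.lt_succ_iff] using hm)]
  calc ∑' n : ℕ, ℙ {ω | ∑ i ∈ Finset.range (n + 1), ξ i ω ≤ x + h}
      ≤ ∑' n : ℕ, (ℙ {ω | ∑ i ∈ Finset.range (n + 1), ξ i ω ≤ x}
          + ∑ m ∈ Finset.range (n + 1), ℙ (A m) * c (n - m)) :=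
        ENNReal.tsum_le_tsum hstep
    _ = (∑' n : ℕ, ℙ {ω | ∑ i ∈ Finset.range (n + 1), ξ i ω ≤ x})
          + ∑' n : ℕ, ∑ m ∈ Finset.range (n + 1), ℙ (A m) * c (n - m) :=
        ENNReal.tsum_add
    _ = (∑' n : ℕ, ℙ {ω | ∑ i ∈ Finset.range (n + 1), ξ i ω ≤ x})
          + (∑' m, ℙ (A m)) * ∑' j, c j := by rw [my_tsum_conv]
    _ ≤ (∑' n : ℕ, ℙ {ω | ∑ i ∈ Finset.range (n + 1), ξ i ω ≤ x})
          + 1 * (1 + ∑' n : ℕ, ℙ {ω | ∑ i ∈ Finset.range (n + 1), ξ i ω ≤ h}) := by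
        gcongr
        rw [hcsum]
    _ = (∑' n : ℕ, ℙ {ω | ∑ i ∈ Finset.range (n + 1), ξ i ω ≤ x})
          + ((∑' n : ℕ, ℙ {ω | ∑ i ∈ Finset.range (n + 1), ξ i ω ≤ h}) + 1) := by
        rw [one_mul, add_comm 1]
/-- subadditivity-type bound for the iterated renewal function:
`V_k(x+h) - V_k(x) ≤ (V(h)+1) (V(x+h))^(k-1)`. -/
theorem stmt_0
    {Ω : Type*} [MeasureSpace Ω] [IsProbabilityMeasure (ℙ : Measure Ω)]
    (ξ : ℕ → Ω → ℝ) (hmeas : ∀ n, Measurable (ξ n))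
    (hindep : iIndepFun ξ ℙ)
    (hident : ∀ n, IdentDistrib (ξ n) (ξ 0) ℙ ℙ)
    (hpos : ∀ n, ∀ᵐ ω ∂ℙ, 0 < ξ n ω)
    (V : ℝ → ℝ)
    (hV : ∀ t, V t = ∑' n : ℕ, (ℙ {ω | ∑ i ∈ Finset.range (n + 1), ξ i ω ≤ t}).toReal)
    (μV : Measure ℝ)
    (hμV : ∀ a b : ℝ, a ≤ b → μV (Set.Ioc a b) = ENNReal.ofReal (V b - V a))
    (hμV0 : μV (Set.Iic 0) = 0)
    (Vk : ℕ → ℝ → ℝ)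
    (hVk1 : ∀ t, Vk 1 t = V t)
    (hVkrec : ∀ k, 1 ≤ k → ∀ t, Vk (k + 1) t = ∫ y in Set.Icc (0 : ℝ) t, Vk k (t - y) ∂μV)
    (k : ℕ) (hk : 1 ≤ k) (x h : ℝ) (hx : 0 ≤ x) (hh : 0 ≤ h) :
    Vk k (x + h) - Vk k x ≤ (V h + 1) * (V (x + h)) ^ (k - 1) := by
  classical
  set W : ℝ → ENNReal :=
    fun t => ∑' n : ℕ, ℙ {ω | ∑ i ∈ Finset.range (n + 1), ξ i ω ≤ t} with hWdef
  have hVW : ∀ t, V t = (W t).toReal := by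
    intro t
    rw [hV t, hWdef]
    exact (ENNReal.tsum_toReal_eq fun n => measure_ne_top _ _).symm
  have hp0 : ∀ (n : ℕ) (t : ℝ), t ≤ 0 →
      ℙ {ω | ∑ i ∈ Finset.range (n + 1), ξ i ω ≤ t} = 0 := by
    intro n t ht
    have hSpos : ∀ᵐ ω ∂ℙ, 0 < ∑ i ∈ Finset.range (n + 1), ξ i ω := by
      have hall : ∀ᵐ ω ∂ℙ, ∀ i ∈ Finset.range (n + 1), 0 < ξ i ω :=
        (ae_ball_iff (Finset.range (n + 1)).countable_toSet).2 fun i _ => hpos i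
      filter_upwards [hall] with ω hω
      exact Finset.sum_pos (fun i hi => hω i hi) Finset.nonempty_range_add_one
    refine measure_mono_null ?_ (ae_iff.1 hSpos)
    intro ω hω
    simp only [Set.mem_setOf_eq, not_lt]
    exact le_trans hω ht
  have hW0 : ∀ t ≤ (0 : ℝ), W t = 0 := by
    intro t ht
    rw [hWdef]
    exact ENNReal.tsum_eq_zero.2 fun n => hp0 n t ht
  have hV0 : ∀ t ≤ (0 : ℝ), V t = 0 := fun t ht => by
    rw [hVW t, hW0 t ht]; simp
  have hVnonneg : ∀ t, 0 ≤ V t := fun t => by rw [hVW t]; exact ENNReal.toReal_nonneg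
  have hWmono : ∀ s t : ℝ, s ≤ t → W s ≤ W t := by
    intro s t hst
    exact ENNReal.tsum_le_tsum fun n => measure_mono fun ω hω => le_trans hω hst
  have hVmono : Monotone V := by
    intro s t hst
    rcases le_or_gt s 0 with hs | hs
    · rw [hV0 s hs]; exact hVnonneg t
    · have hmono := measure_mono (μ := μV) (Set.Ioc_subset_Ioc_right hst :
        Set.Ioc 0 s ⊆ Set.Ioc 0 t)
      rw [hμV 0 s hs.le, hμV 0 t (hs.le.trans hst), hV0 0 le_rfl, sub_zero, sub_zero] at hmono
      exact (ENNReal.ofReal_le_ofReal_iff (hVnonneg t)).1 hmono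
  -- base subadditivity
  have hsub1 : ∀ x' h' : ℝ, 0 ≤ x' → 0 ≤ h' → V (x' + h') - V x' ≤ V h' + 1 := by
    intro x' h' hx' hh'
    by_cases htop : W (x' + h') = ⊤
    · rw [hVW (x' + h'), htop]
      simp only [ENNReal.toReal_top]
      have h1 := hVnonneg x'
      have h2 := hVnonneg h'
      linarith
    · have hkey : W (x' + h') ≤ W x' + (W h' + 1) :=
        my_W_subadd ξ hmeas hindep hident x' h' hh'
      have hx'fin : W x' ≠ ⊤ := fun hc => htop (top_le_iff.1 (hc ▸ hWmono x' (x' + h') (by linarith)))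
      have hh'fin : W h' ≠ ⊤ := fun hc => htop (top_le_iff.1 (hc ▸ hWmono h' (x' + h') (by linarith)))
      have h2 : (W (x' + h')).toReal ≤ (W x' + (W h' + 1)).toReal := by
        refine ENNReal.toReal_mono ?_ hkey
        exact ENNReal.add_ne_top.2 ⟨hx'fin, ENNReal.add_ne_top.2 ⟨hh'fin, ENNReal.one_ne_top⟩⟩
      rw [ENNReal.toReal_add hx'fin (ENNReal.add_ne_top.2 ⟨hh'fin, ENNReal.one_ne_top⟩),
        ENNReal.toReal_add hh'fin ENNReal.one_ne_top, ENNReal.toReal_one] at h2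
      rw [hVW (x' + h'), hVW x', hVW h']
      linarith
  -- μV facts
  have hIcc : ∀ t : ℝ, 0 ≤ t → μV (Set.Icc 0 t) = ENNReal.ofReal (V t) := by
    intro t ht
    have h1 : μV (Set.Ioc 0 t) = ENNReal.ofReal (V t) := by
      rw [hμV 0 t ht, hV0 0 le_rfl, sub_zero]
    refine le_antisymm ?_ ?_
    · have hsub : Set.Icc 0 t ⊆ Set.Iic 0 ∪ Set.Ioc 0 t := by
        intro y hy
        rcases le_or_gt y 0 with hy0 | hy0
        · exact Or.inl hy0
        · exact Or.inr ⟨hy0, hy.2⟩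
      calc μV (Set.Icc 0 t) ≤ μV (Set.Iic 0 ∪ Set.Ioc 0 t) := measure_mono hsub
        _ ≤ μV (Set.Iic 0) + μV (Set.Ioc 0 t) := measure_union_le _ _
        _ = ENNReal.ofReal (V t) := by rw [hμV0, h1, zero_add]
    · rw [← h1]
      exact measure_mono Set.Ioc_subset_Icc_self
  have hIccfin : ∀ t : ℝ, μV (Set.Icc 0 t) ≠ ⊤ := by
    intro t
    rcases le_or_gt 0 t with ht | ht
    · rw [hIcc t ht]; exact ENNReal.ofReal_ne_top
    · rw [Set.Icc_eq_empty (by linarith)]; simp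
  have hIcczero : ∀ t ≤ (0 : ℝ), μV (Set.Icc 0 t) = 0 := by
    intro t ht
    refine measure_mono_null ?_ hμV0
    intro y hy
    exact le_trans hy.2 ht
  -- Vk properties
  have hVkprop : ∀ k : ℕ, 1 ≤ k →
      (∀ t ≤ (0 : ℝ), Vk k t = 0) ∧ Monotone (Vk k) ∧ (∀ t, 0 ≤ Vk k t)
        ∧ (∀ t, Vk k t ≤ V t ^ k) := by
    intro k hk1
    induction k, hk1 using Nat.le_induction with
    | base =>
      refine ⟨fun t ht => by rw [hVk1]; exact hV0 t ht,
        fun s t hst => by rw [hVk1, hVk1]; exact hVmono hst,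
        fun t => by rw [hVk1]; exact hVnonneg t,
        fun t => by rw [hVk1, pow_one]⟩
    | succ k hk1 ih =>
      obtain ⟨ih0, ihmono, ihnn, ihb⟩ := ih
      have hmeasVk : Measurable (Vk k) := ihmono.measurable
      have hrec := hVkrec k hk1
      have hfm : ∀ c : ℝ, IsFiniteMeasure (μV.restrict (Set.Icc 0 c)) := by
        intro c
        refine ⟨?_⟩
        rw [Measure.restrict_apply_univ]
        exact (hIccfin c).lt_top
      have hint : ∀ t c : ℝ, IntegrableOn (fun y => Vk k (t - y)) (Set.Icc 0 c) μV := by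
        intro t c
        have := hfm c
        refine Integrable.mono' (integrable_const (Vk k |t|)) ?_ ?_
        · exact (hmeasVk.comp (measurable_const.sub measurable_id)).aestronglyMeasurable
        · refine (ae_restrict_iff' measurableSet_Icc).2 (Filter.Eventually.of_forall
            fun y hy => ?_)
          rw [Real.norm_eq_abs, abs_of_nonneg (ihnn _)]
          exact ihmono (by cases abs_cases t with
            | inl hc => exact le_trans (by linarith [hy.1]) (by linarith [hc.1])
            | inr hc => linarith [hy.1, hc.1, abs_nonneg t])
      have hzero : ∀ t ≤ (0 : ℝ), Vk (k + 1) t = 0 := by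
        intro t ht
        rw [hrec t]
        rw [Measure.restrict_eq_zero.2 (hIcczero t ht)]
        exact integral_zero_measure _
      have hnn : ∀ t, 0 ≤ Vk (k + 1) t := by
        intro t
        rw [hrec t]
        exact setIntegral_nonneg measurableSet_Icc fun y _ => ihnn _
      have hmono : Monotone (Vk (k + 1)) := by
        intro s t hst
        rcases le_or_gt s 0 with hs | hs
        · rw [hzero s hs]; exact hnn t
        · rw [hrec s, hrec t]
          calc ∫ y in Set.Icc 0 s, Vk k (s - y) ∂μV
              ≤ ∫ y in Set.Icc 0 s, Vk k (t - y) ∂μV := by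
                refine setIntegral_mono_on (hint s s) (hint t s) measurableSet_Icc ?_
                intro y _
                exact ihmono (by linarith)
            _ ≤ ∫ y in Set.Icc 0 t, Vk k (t - y) ∂μV := by
                refine setIntegral_mono_set (hint t t) ?_ ?_
                · exact Filter.Eventually.of_forall fun y => ihnn _
                · exact HasSubset.Subset.eventuallyLE (Set.Icc_subset_Icc_right hst)
      have hbound : ∀ t, Vk (k + 1) t ≤ V t ^ (k + 1) := by
        intro t
        rcases le_or_gt t 0 with ht | ht
        · rw [hzero t ht, hV0 t ht, zero_pow (by omega : k + 1 ≠ 0)]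
        · have := hfm t
          rw [hrec t]
          calc ∫ y in Set.Icc 0 t, Vk k (t - y) ∂μV
              ≤ ∫ _ in Set.Icc 0 t, V t ^ k ∂μV := by
                refine setIntegral_mono_on (hint t t) (integrable_const _)
                  measurableSet_Icc ?_
                intro y hy
                exact (ihb _).trans (pow_le_pow_left₀ (hVnonneg _)
                  (hVmono (by linarith [hy.1])) k)
            _ = (μV (Set.Icc 0 t)).toReal • (V t ^ k) := setIntegral_const _
            _ = V t ^ (k + 1) := by
                rw [hIcc t ht.le, ENNReal.toReal_ofReal (hVnonneg t), smul_eq_mul]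
                ring
      exact ⟨hzero, hmono, hnn, hbound⟩
  -- main induction
  have main : ∀ k : ℕ, 1 ≤ k → ∀ x' h' : ℝ, 0 ≤ x' → 0 ≤ h' →
      Vk k (x' + h') - Vk k x' ≤ (V h' + 1) * V (x' + h') ^ (k - 1) := by
    intro k hk1
    induction k, hk1 using Nat.le_induction with
    | base =>
      intro x' h' hx' hh'
      rw [hVk1, hVk1]
      simpa using hsub1 x' h' hx' hh'
    | succ k hk1 ih =>
      intro x' h' hx' hh'
      obtain ⟨hk0, hkmono, hknn, hkb⟩ := hVkprop k hk1
      have hmeasVk : Measurable (Vk k) := hkmono.measurable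
      have hfm : ∀ c : ℝ, IsFiniteMeasure (μV.restrict (Set.Icc 0 c)) := by
        intro c
        refine ⟨?_⟩
        rw [Measure.restrict_apply_univ]
        exact (hIccfin c).lt_top
      have hint : ∀ t c : ℝ, IntegrableOn (fun y => Vk k (t - y)) (Set.Icc 0 c) μV := by
        intro t c
        have := hfm c
        refine Integrable.mono' (integrable_const (Vk k |t|)) ?_ ?_
        · exact (hmeasVk.comp (measurable_const.sub measurable_id)).aestronglyMeasurable
        · refine (ae_restrict_iff' measurableSet_Icc).2 (Filter.Eventually.of_forall
            fun y hy => ?_)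
          rw [Real.norm_eq_abs, abs_of_nonneg (hknn _)]
          exact hkmono (by cases abs_cases t with
            | inl hc => exact le_trans (by linarith [hy.1]) (by linarith [hc.1])
            | inr hc => linarith [hy.1, hc.1, abs_nonneg t])
      set C : ℝ := (V h' + 1) * V (x' + h') ^ (k - 1) with hCdef
      have hCnn : 0 ≤ C := by
        have := hVnonneg h'
        have := pow_nonneg (hVnonneg (x' + h')) (k - 1)
        positivity
      -- split of the integral
      have hIoc_sub : Set.Ioc x' (x' + h') ⊆ Set.Icc 0 (x' + h') := fun y hy =>
        ⟨le_trans hx' hy.1.le, hy.2⟩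
      have hint3 : IntegrableOn (fun y => Vk k (x' + h' - y)) (Set.Ioc x' (x' + h')) μV :=
        (hint (x' + h') (x' + h')).mono_set hIoc_sub
      have hsplit : Vk (k + 1) (x' + h')
          = (∫ y in Set.Icc 0 x', Vk k (x' + h' - y) ∂μV)
            + ∫ y in Set.Ioc x' (x' + h'), Vk k (x' + h' - y) ∂μV := by
        rw [hVkrec k hk1 (x' + h')]
        rw [show Set.Icc (0:ℝ) (x' + h') = Set.Icc 0 x' ∪ Set.Ioc x' (x' + h') from
          (Set.Icc_union_Ioc_eq_Icc hx' (by linarith)).symm]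
        exact setIntegral_union
          (Set.disjoint_left.2 fun y hy hy' => absurd hy.2 (not_le.2 hy'.1))
          measurableSet_Ioc (hint (x' + h') x') hint3
      have hterm1 : (∫ y in Set.Icc 0 x', Vk k (x' + h' - y) ∂μV)
          - (∫ y in Set.Icc 0 x', Vk k (x' - y) ∂μV) ≤ C * V x' := by
        rw [← integral_sub (hint (x' + h') x') (hint x' x')]
        have := hfm x'
        calc ∫ y in Set.Icc 0 x', (Vk k (x' + h' - y) - Vk k (x' - y)) ∂μV
            ≤ ∫ _ in Set.Icc 0 x', C ∂μV := by
              refine setIntegral_mono_on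
                ((hint (x' + h') x').sub (hint x' x')) (integrable_const _)
                measurableSet_Icc ?_
              intro y hy
              have heq : x' + h' - y = (x' - y) + h' := by ring
              rw [heq]
              refine (ih (x' - y) h' (by linarith [hy.2]) hh').trans ?_
              rw [hCdef]
              refine mul_le_mul_of_nonneg_left ?_ (by linarith [hVnonneg h'])
              exact pow_le_pow_left₀ (hVnonneg _) (hVmono (by linarith [hy.1])) (k - 1)
          _ = (μV (Set.Icc 0 x')).toReal • C := setIntegral_const _
          _ = C * V x' := by
              rw [hIcc x' hx', ENNReal.toReal_ofReal (hVnonneg x'), smul_eq_mul]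
              ring
      have hfmIoc : IsFiniteMeasure (μV.restrict (Set.Ioc x' (x' + h'))) := by
        refine ⟨?_⟩
        rw [Measure.restrict_apply_univ, hμV x' (x' + h') (by linarith)]
        exact ENNReal.ofReal_lt_top
      have hterm2 : (∫ y in Set.Ioc x' (x' + h'), Vk k (x' + h' - y) ∂μV)
          ≤ (V (x' + h') - V x') * V h' ^ k := by
        calc ∫ y in Set.Ioc x' (x' + h'), Vk k (x' + h' - y) ∂μV
            ≤ ∫ _ in Set.Ioc x' (x' + h'), V h' ^ k ∂μV := by
              refine setIntegral_mono_on hint3 (integrable_const _) measurableSet_Ioc ?_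
              intro y hy
              exact (hkb _).trans (pow_le_pow_left₀ (hVnonneg _)
                (hVmono (by linarith [hy.1])) k)
          _ = (μV (Set.Ioc x' (x' + h'))).toReal • (V h' ^ k) := setIntegral_const _
          _ = (V (x' + h') - V x') * V h' ^ k := by
              rw [hμV x' (x' + h') (by linarith),
                ENNReal.toReal_ofReal (by linarith [hVmono (by linarith : x' ≤ x' + h')]),
                smul_eq_mul]
      have hVhk : V h' ^ k ≤ C := by
        rw [hCdef]
        have hk' : k = (k - 1) + 1 := by omega
        have hpow : V h' ^ k = V h' * V h' ^ (k - 1) := by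
              conv_lhs => rw [hk']
              rw [pow_succ]; ring
        calc V h' ^ k = V h' * V h' ^ (k - 1) := hpow
          _ ≤ (V h' + 1) * V (x' + h') ^ (k - 1) := by
              refine mul_le_mul (by linarith) ?_ (pow_nonneg (hVnonneg h') _)
                (by linarith [hVnonneg h'])
              exact pow_le_pow_left₀ (hVnonneg h') (hVmono (by linarith)) (k - 1)
      have hVd : 0 ≤ V (x' + h') - V x' := by linarith [hVmono (by linarith : x' ≤ x' + h')]
      have hfinal : Vk (k + 1) (x' + h') - Vk (k + 1) x' ≤ C * V (x' + h') := by
        rw [hsplit, hVkrec k hk1 x']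
        have h2 : (V (x' + h') - V x') * V h' ^ k ≤ (V (x' + h') - V x') * C :=
          mul_le_mul_of_nonneg_left hVhk hVd
        nlinarith [hterm1, hterm2]
      refine hfinal.trans ?_
      refine le_of_eq ?_
      have hke : (k + 1) - 1 = ((k - 1) + 1 : ℕ) := by omega
      rw [hCdef, hke, pow_succ]
      ring
  exact main k hk x h hx hh
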